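/- arXiv:2604.17067 — 4 statements merged into one kernel-verified Lean document; each statement's English description precedes it below -/
import Mathlib

section
/- Suppose the iterate x_k lies in a set K ⊆ ℝ^d and F satisfies the K-restricted proximal PL inequality with constant ν_K > 0. Then the proximal gradient update x_{k+1} = prox_{g/L}(x_k − (1/L)∇f(x_k)) satisfies F(x_{k+1}) − F* ≤ (1 − ν_K/L)(F(x_k) − F*). -/
noncomputable section

open Metric Set
open scoped RealInnerProductSpace

/-- `E d` is the Euclidean space `ℝ^d`. -/
abbrev E (d : ℕ) : Type := EuclideanSpace ℝ (Fin d)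

/-- The generalized gradient size
`𝒟_g(x, α) := −2α · min_y [⟨∇f(x), y − x⟩ + (α/2)‖y − x‖² + g(y) − g(x)]`,
where `f'` is the gradient of `f`. -/
noncomputable def Dg {d : ℕ} (f' : E d → E d) (g : E d → ℝ) (α : ℝ) (x : E d) : ℝ :=
  -(2 * α) * ⨅ y : E d, (⟪f' x, y - x⟫ + α / 2 * ‖y - x‖ ^ 2 + g y - g x)

/-- Descent lemma for functions with Lipschitz gradient. -/
lemma descent_lemma {d : ℕ} (f : E d → ℝ) (f' : E d → E d) (L : ℝ)
    (hf' : ∀ x, HasGradientAt f (f' x) x)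
    (hlip : ∀ x y, ‖f' x - f' y‖ ≤ L * ‖x - y‖) (x y : E d) :
    f y ≤ f x + ⟪f' x, y - x⟫ + L / 2 * ‖y - x‖ ^ 2 := by
  set v := y - x with hv
  have hcf' : Continuous f' := by
    have : LipschitzWith (Real.toNNReal L) f' := by
      apply LipschitzWith.of_dist_le_mul
      intro a b
      rw [dist_eq_norm, dist_eq_norm]
      refine (hlip a b).trans ?_
      gcongr
      exact Real.le_coe_toNNReal L
    exact this.continuous
  have hline : ∀ t : ℝ, HasDerivAt (fun t : ℝ => x + t • v) v t := by
    intro t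
    simpa using ((hasDerivAt_id t).smul_const v).const_add x
  have hφ : ∀ t : ℝ, HasDerivAt (fun t : ℝ => f (x + t • v)) ⟪f' (x + t • v), v⟫ t := by
    intro t
    have := (hf' (x + t • v)).hasFDerivAt.comp_hasDerivAt t (hline t)
    simp [InnerProductSpace.toDual_apply_apply] at this
    exact this
  have hcont : Continuous fun t : ℝ => ⟪f' (x + t • v), v⟫ := by
    exact (hcf'.comp (by continuity)).inner continuous_const
  have hint : f (x + (1:ℝ) • v) - f (x + (0:ℝ) • v) =
      ∫ t in (0:ℝ)..1, ⟪f' (x + t • v), v⟫ := by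
    rw [← intervalIntegral.integral_eq_sub_of_hasDerivAt (fun t _ => hφ t)
      (hcont.intervalIntegrable 0 1)]
  have hxy : x + (1:ℝ) • v = y := by simp [hv]
  have hx0 : x + (0:ℝ) • v = x := by simp
  have hmono : (∫ t in (0:ℝ)..1, ⟪f' (x + t • v), v⟫) ≤
      ∫ t in (0:ℝ)..1, (⟪f' x, v⟫ + L * ‖v‖ ^ 2 * t) := by
    apply intervalIntegral.integral_mono_on (by norm_num)
      (hcont.intervalIntegrable 0 1)
      (((by fun_prop : Continuous fun t : ℝ => ⟪f' x, v⟫ + L * ‖v‖ ^ 2 * t)).intervalIntegrable 0 1)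
    intro t ht
    have h1 : ⟪f' (x + t • v), v⟫ - ⟪f' x, v⟫ = ⟪f' (x + t • v) - f' x, v⟫ := by
      rw [inner_sub_left]
    have h2 : ⟪f' (x + t • v) - f' x, v⟫ ≤ ‖f' (x + t • v) - f' x‖ * ‖v‖ :=
      real_inner_le_norm _ _
    have h3 : ‖f' (x + t • v) - f' x‖ ≤ L * ‖t • v‖ := by
      simpa using hlip (x + t • v) x
    have h4 : ‖t • v‖ = t * ‖v‖ := by
      rw [norm_smul, Real.norm_eq_abs, abs_of_nonneg ht.1]
    have h5 : ⟪f' (x + t • v), v⟫ - ⟪f' x, v⟫ ≤ L * (t * ‖v‖) * ‖v‖ := by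
      rw [h1]
      calc ⟪f' (x + t • v) - f' x, v⟫ ≤ ‖f' (x + t • v) - f' x‖ * ‖v‖ := h2
        _ ≤ L * ‖t • v‖ * ‖v‖ := by
            exact mul_le_mul_of_nonneg_right h3 (norm_nonneg v)
        _ = L * (t * ‖v‖) * ‖v‖ := by rw [h4]
    have h6 : L * (t * ‖v‖) * ‖v‖ = L * ‖v‖ ^ 2 * t := by ring
    linarith
  have hval : (∫ t in (0:ℝ)..1, (⟪f' x, v⟫ + L * ‖v‖ ^ 2 * t)) =
      ⟪f' x, v⟫ + L / 2 * ‖v‖ ^ 2 := by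
    rw [intervalIntegral.integral_add (intervalIntegrable_const)
      (((by fun_prop : Continuous fun t : ℝ => L * ‖v‖ ^ 2 * t)).intervalIntegrable 0 1),
      intervalIntegral.integral_const_mul, integral_id]
    simp; ring
  have := hint
  rw [hxy, hx0] at this
  rw [hval] at hmono
  linarith [this ▸ hmono]

/-- Restricted linear convergence, one step.
If the iterate `xk` lies in `K` and `F = f + g` satisfies the `K`-restricted proximal PL
inequality with constant `ν > 0`, then the proximal gradient update
`xk1 = prox_{g/L}(xk − (1/L)∇f(xk))` (characterized as the minimizer of the proximal
subproblem) satisfies `F(xk1) − F* ≤ (1 − ν/L)(F(xk) − F*)`. -/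
theorem stmt_0 {d : ℕ} (f g F : E d → ℝ) (f' : E d → E d)
    (L ν Fstar : ℝ) (K : Set (E d)) (xk xk1 : E d)
    (hF : ∀ x, F x = f x + g x)
    (hL : 0 < L)
    (hf' : ∀ x, HasGradientAt f (f' x) x)
    (hlip : ∀ x y, ‖f' x - f' y‖ ≤ L * ‖x - y‖)
    (hg : ConvexOn ℝ Set.univ g)
    (hFstar : IsLeast (Set.range F) Fstar)
    (hν : 0 < ν)
    (hPL : ∀ x ∈ K, ν * (F x - Fstar) ≤ 1 / 2 * Dg f' g L x)
    (hxk : xk ∈ K)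
    (hstep : ∀ y, g xk1 + L / 2 * ‖xk1 - (xk - L⁻¹ • f' xk)‖ ^ 2 ≤
      g y + L / 2 * ‖y - (xk - L⁻¹ • f' xk)‖ ^ 2) :
    F xk1 - Fstar ≤ (1 - ν / L) * (F xk - Fstar) := by
  set Q : E d → ℝ := fun y => ⟪f' xk, y - xk⟫ + L / 2 * ‖y - xk‖ ^ 2 + g y - g xk with hQdef
  have key : ∀ y, g y + L / 2 * ‖y - (xk - L⁻¹ • f' xk)‖ ^ 2 =
      Q y + g xk + (2 * L)⁻¹ * ‖f' xk‖ ^ 2 := by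
    intro y
    have h1 : y - (xk - L⁻¹ • f' xk) = (y - xk) + L⁻¹ • f' xk := by
      module
    rw [h1, norm_add_sq_real, real_inner_smul_right, norm_smul, hQdef]
    simp only [Real.norm_eq_abs, abs_of_pos (inv_pos.mpr hL)]
    rw [real_inner_comm]
    field_simp
    ring
  have hQ : ∀ y, Q xk1 ≤ Q y := by
    intro y
    have := hstep y
    rw [key y, key xk1] at this
    exact (add_le_add_iff_right _).mp ((add_le_add_iff_right _).mp this)
  have hinf : (⨅ y : E d, (⟪f' xk, y - xk⟫ + L / 2 * ‖y - xk‖ ^ 2 + g y - g xk)) = Q xk1 := by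
    refine le_antisymm (ciInf_le ⟨Q xk1, ?_⟩ xk1) (le_ciInf hQ)
    rintro z ⟨y, rfl⟩
    exact hQ y
  have hPL' := hPL xk hxk
  rw [Dg, hinf] at hPL'
  -- hPL' : ν * (F xk - Fstar) ≤ 1/2 * (-(2*L) * Q xk1)
  have hdesc := descent_lemma f f' L hf' hlip xk xk1
  have hq1 : Q xk1 = ⟪f' xk, xk1 - xk⟫ + L / 2 * ‖xk1 - xk‖ ^ 2 + g xk1 - g xk := rfl
  have hFstep : F xk1 ≤ F xk + Q xk1 := by
    rw [hF xk1, hF xk, hq1]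
    linarith
  have hLQ : ν * (F xk - Fstar) ≤ -L * Q xk1 :=
    le_of_le_of_eq hPL' (by ring)
  have hmul : L * (F xk1 - Fstar) ≤ (L - ν) * (F xk - Fstar) := by
    nlinarith [mul_le_mul_of_nonneg_left hFstep hL.le]
  calc F xk1 - Fstar = L * (F xk1 - Fstar) / L := by field_simp
    _ ≤ (L - ν) * (F xk - Fstar) / L := by
        exact div_le_div_of_nonneg_right hmul hL.le
    _ = (1 - ν / L) * (F xk - Fstar) := by field_simp
end
end

section
/- Let K ⊆ ℝ^d. If F satisfies the K-restricted proximal error bound with constant μ_K > 0, then F satisfies the K-restricted proximal PL inequality with constant ν_K = L/(1 + 4L²μ_K²). -/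
set_option maxHeartbeats 1000000


noncomputable section

open Metric Set
open scoped RealInnerProductSpace

/-- Taylor-type bound for functions with Lipschitz gradient. -/
lemma taylor_bound {d : ℕ} (f : E d → ℝ) (f' : E d → E d) (L : ℝ) (hL : 0 < L)
    (hf' : ∀ x, HasGradientAt f (f' x) x)
    (hlip : ∀ x y, ‖f' x - f' y‖ ≤ L * ‖x - y‖) (x y : E d) :
    |f y - f x - ⟪f' x, y - x⟫| ≤ L * ‖y - x‖ ^ 2 := by
  have h := (convex_closedBall x ‖y - x‖).norm_image_sub_le_of_norm_hasFDerivWithin_le'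
    (f' := fun z => InnerProductSpace.toDual ℝ (E d) (f' z))
    (φ := InnerProductSpace.toDual ℝ (E d) (f' x)) (C := L * ‖y - x‖)
    (fun z _ => ((hf' z).hasFDerivAt).hasFDerivWithinAt)
    (fun z hz => by
      rw [← map_sub, LinearIsometryEquiv.norm_map]
      calc ‖f' z - f' x‖ ≤ L * ‖z - x‖ := hlip z x
        _ ≤ L * ‖y - x‖ := by
          have := mem_closedBall_iff_norm.mp hz
          nlinarith)
    (mem_closedBall_self (norm_nonneg _))
    (show y ∈ closedBall x ‖y - x‖ by simp [mem_closedBall, dist_eq_norm])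
  rw [InnerProductSpace.toDual_apply_apply] at h
  calc |f y - f x - ⟪f' x, y - x⟫| = ‖f y - f x - ⟪f' x, y - x⟫‖ := rfl
    _ ≤ L * ‖y - x‖ * ‖y - x‖ := h
    _ = L * ‖y - x‖ ^ 2 := by ring

/-- Subgradient inequality at the minimizer of `y ↦ g y + L/2 ‖y - u‖²`. -/
lemma subgrad {d : ℕ} (g : E d → ℝ) (L : ℝ) (hL : 0 < L) (u p : E d)
    (hg : ConvexOn ℝ Set.univ g)
    (hmin : ∀ y, g p + L / 2 * ‖p - u‖ ^ 2 ≤ g y + L / 2 * ‖y - u‖ ^ 2) :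
    ∀ y, g p + L * ⟪u - p, y - p⟫ ≤ g y := by
  intro y
  have key : ∀ t : ℝ, 0 < t → t ≤ 1 →
      g p + L * ⟪u - p, y - p⟫ ≤ g y + L * t / 2 * ‖y - p‖ ^ 2 := by
    intro t ht ht1
    have hgz : g ((1 - t) • p + t • y) ≤ (1 - t) * g p + t * g y :=
      hg.2 (mem_univ p) (mem_univ y) (by linarith) ht.le (by ring)
    have hmz := hmin ((1 - t) • p + t • y)
    have hnorm : ‖(1 - t) • p + t • y - u‖ ^ 2
        = ‖p - u‖ ^ 2 + 2 * (t * ⟪p - u, y - p⟫) + t ^ 2 * ‖y - p‖ ^ 2 := by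
      have h : (1 - t) • p + t • y - u = (p - u) + t • (y - p) := by module
      rw [h, norm_add_sq_real, real_inner_smul_right, norm_smul]
      simp [abs_of_pos ht]
      ring
    have hinner : ⟪u - p, y - p⟫ = -⟪p - u, y - p⟫ := by
      rw [show u - p = -(p - u) by abel, inner_neg_left]
    rw [hinner]
    have h2 : t * g p ≤ t * g y + L * (t * ⟪p - u, y - p⟫) + L / 2 * (t ^ 2 * ‖y - p‖ ^ 2) := by
      nlinarith [hmz, hgz, hnorm]
    have h3 : g p ≤ g y + L * ⟪p - u, y - p⟫ + L * t / 2 * ‖y - p‖ ^ 2 := by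
      refine le_of_mul_le_mul_left ?_ ht
      nlinarith [h2]
    linarith
  refine le_of_forall_sub_le ?_
  intro ε hε
  set B := ‖y - p‖ ^ 2 with hB
  have hB0 : 0 ≤ B := sq_nonneg _
  set t : ℝ := min 1 (2 * ε / (L * (B + 1))) with htdef
  have hden : 0 < L * (B + 1) := by nlinarith
  have ht : 0 < t := lt_min one_pos (by positivity)
  have ht1 : t ≤ 1 := min_le_left _ _
  have ht2 : t ≤ 2 * ε / (L * (B + 1)) := min_le_right _ _
  have hk := key t ht ht1
  have : L * t / 2 * B ≤ ε := by
    rw [le_div_iff₀ hden] at ht2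
    nlinarith [mul_pos hL ht]
  linarith

/-- Bilinearity helper. -/
lemma inner_helper1 {d : ℕ} (a c : E d) (r : ℝ) :
    ⟪-a - r • c, -a⟫ = ⟪a, a⟫ + r * ⟪c, a⟫ := by
  simp only [inner_sub_left, inner_neg_left, inner_neg_right, real_inner_smul_left]
  ring

/-- Bilinearity helper. -/
lemma inner_helper2 {d : ℕ} (a b c : E d) (r : ℝ) :
    ⟪-a - r • c, b - a⟫ = ⟪a, a⟫ - ⟪a, b⟫ - r * ⟪c, b⟫ + r * ⟪c, a⟫ := by
  simp only [inner_sub_left, inner_sub_right, inner_neg_left, inner_neg_right,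
    real_inner_smul_left]
  ring

/-- Restricted EB implies restricted PL.
Here `prox x = prox_{g/L}(x − (1/L)∇f(x))` is characterized as the minimizer of the
proximal subproblem, so that the proximal gradient mapping is `𝒢_{1/L}(x) = L(x − prox x)`,
and `𝒳* = {z | F z = F*}`. If `F = f + g` satisfies the `K`-restricted proximal error
bound `dist(x, 𝒳*) ≤ μ ‖𝒢_{1/L}(x)‖` on `K` with `μ > 0`, then `F` satisfies the
`K`-restricted proximal PL inequality with constant `ν = L/(1 + 4L²μ²)`. -/
theorem stmt_3 {d : ℕ} (f g F : E d → ℝ) (f' prox : E d → E d)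
    (L μ Fstar : ℝ) (K : Set (E d))
    (hF : ∀ x, F x = f x + g x)
    (hL : 0 < L)
    (hf' : ∀ x, HasGradientAt f (f' x) x)
    (hlip : ∀ x y, ‖f' x - f' y‖ ≤ L * ‖x - y‖)
    (hg : ConvexOn ℝ Set.univ g)
    (hFstar : IsLeast (Set.range F) Fstar)
    (hprox : ∀ x y, g (prox x) + L / 2 * ‖prox x - (x - L⁻¹ • f' x)‖ ^ 2 ≤
      g y + L / 2 * ‖y - (x - L⁻¹ • f' x)‖ ^ 2)
    (hμ : 0 < μ)
    (hEB : ∀ x ∈ K, infDist x {z | F z = Fstar} ≤ μ * ‖L • (x - prox x)‖) :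
    ∀ x ∈ K, L / (1 + 4 * L ^ 2 * μ ^ 2) * (F x - Fstar) ≤ 1 / 2 * Dg f' g L x := by

  intro x hx
  have hL' : (L : ℝ) ≠ 0 := ne_of_gt hL
  set u : E d := x - L⁻¹ • f' x with hu
  set p : E d := prox x with hp
  set φ : E d → ℝ := fun y => ⟪f' x, y - x⟫ + L / 2 * ‖y - x‖ ^ 2 + g y - g x with hφ
  -- identity relating φ with the prox objective
  have hid : ∀ y, φ y = (g y + L / 2 * ‖y - u‖ ^ 2) - ((2 * L)⁻¹ * ‖f' x‖ ^ 2 + g x) := by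
    intro y
    have h1 : y - u = (y - x) + L⁻¹ • f' x := by rw [hu]; abel
    have h2 : ‖(L : ℝ)⁻¹‖ = L⁻¹ := by
      rw [Real.norm_eq_abs, abs_of_pos (inv_pos.mpr hL)]
    rw [hφ]
    simp only
    rw [h1, norm_add_sq_real, real_inner_smul_right, norm_smul, h2,
      real_inner_comm (y - x) (f' x)]
    field_simp
    ring
  -- p minimizes φ
  have hminφ : ∀ y, φ p ≤ φ y := by
    intro y
    have := hprox x y
    rw [hid p, hid y]
    simp only [← hp, ← hu] at this ⊢
    linarith
  -- the infimum in Dg is attained at p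
  have hinf : (⨅ y : E d, (⟪f' x, y - x⟫ + L / 2 * ‖y - x‖ ^ 2 + g y - g x)) = φ p := by
    refine le_antisymm (ciInf_le ⟨φ p, ?_⟩ p) (le_ciInf hminφ)
    rintro a ⟨y, rfl⟩
    exact hminφ y
  have hDg : Dg f' g L x = -(2 * L) * φ p := by rw [Dg, hinf]
  -- subgradient inequality at p
  have hsub := subgrad g L hL u p hg (fun y => hprox x y)
  -- the optimal set
  set S : Set (E d) := {z | F z = Fstar} with hS
  have hSne : S.Nonempty := by
    obtain ⟨z, hz⟩ := hFstar.1
    exact ⟨z, hz⟩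
  have hfc : Continuous f := by
    refine continuous_iff_continuousAt.mpr fun z => ?_
    exact (hf' z).hasFDerivAt.differentiableAt.continuousAt
  have hgc : Continuous g := continuousOn_univ.mp (hg.continuousOn isOpen_univ)
  have hFc : Continuous F := by
    have : F = fun z => f z + g z := funext hF
    rw [this]; exact hfc.add hgc
  have hScl : IsClosed S := isClosed_eq hFc continuous_const
  obtain ⟨xb, hxbS, hdist⟩ := hScl.exists_infDist_eq_dist hSne x
  -- scalar abbreviations
  set A : ℝ := ‖p - x‖ with hA
  set Bn : ℝ := ‖xb - x‖ with hBn
  set i1 : ℝ := ⟪f' x, p - x⟫ with hi1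
  set i2 : ℝ := ⟪f' x, xb - x⟫ with hi2
  set i3 : ℝ := ⟪p - x, xb - x⟫ with hi3
  have hA0 : 0 ≤ A := norm_nonneg _
  have hBn0 : 0 ≤ Bn := norm_nonneg _
  -- error bound
  have hEBx : Bn ≤ μ * (L * A) := by
    have h := hEB x hx
    rw [hdist, dist_eq_norm, norm_sub_rev, norm_smul, Real.norm_eq_abs,
      abs_of_pos hL, norm_sub_rev x p] at h
    exact h
  -- Taylor bound at xb
  have htay : f x - f xb ≤ L * Bn ^ 2 - i2 := by
    have h := abs_le.mp (taylor_bound f f' L hL hf' hlip x xb)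
    rw [← hi2, ← hBn] at h
    linarith [h.1]
  -- subgradient inequality specialized at x
  have hsubx : L * A ^ 2 + i1 ≤ g x - g p := by
    have h := hsub x
    have hexp : ⟪u - p, x - p⟫ = ‖p - x‖ ^ 2 + L⁻¹ * ⟪f' x, p - x⟫ := by
      have h1 : u - p = -(p - x) - L⁻¹ • f' x := by rw [hu]; abel
      have h2 : x - p = -(p - x) := by abel
      rw [h1, h2, inner_helper1, real_inner_self_eq_norm_sq]
    rw [hexp, ← hA, ← hi1] at h
    have hL2 : L * (A ^ 2 + L⁻¹ * i1) = L * A ^ 2 + i1 := by field_simp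
    nlinarith [h]
  -- subgradient inequality specialized at xb
  have hsubxb : g p + (L * A ^ 2 - L * i3 - i2 + i1) ≤ g xb := by
    have h := hsub xb
    have hexp : L * ⟪u - p, xb - p⟫ = L * A ^ 2 - L * i3 - i2 + i1 := by
      have h1 : u - p = -(p - x) - L⁻¹ • f' x := by rw [hu]; abel
      have h2 : xb - p = (xb - x) - (p - x) := by abel
      rw [h1, h2, inner_helper2, real_inner_self_eq_norm_sq]
      rw [← hA, ← hi1, ← hi2, ← hi3]
      field_simp
    nlinarith [h, hexp]
  -- the quantity s = -φ p
  set s : ℝ := g x - g p - i1 - L / 2 * A ^ 2 with hs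
  have hφp : φ p = -s := by
    rw [hφ]; simp only [← hi1, ← hA, hs]; ring
  have hstrong : L / 2 * A ^ 2 ≤ s := by rw [hs]; linarith [hsubx]
  have hFxb : F xb = Fstar := hxbS
  have hCS : i3 ≤ A * Bn := by
    rw [hi3, hA, hBn]; exact real_inner_le_norm _ _
  clear_value A Bn i1 i2 i3 s φ p u
  -- combine
  have hsum : F x - Fstar ≤ s - L / 2 * A ^ 2 + L * Bn ^ 2 + L * i3 := by
    have h1 : F x - Fstar = (f x - f xb) + (g x - g xb) := by
      rw [hF x, ← hFxb, hF xb]; ring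
    have h2 : g x - g xb ≤ g x - g p - L * A ^ 2 + L * i3 + i2 - i1 := by
      linarith [hsubxb]
    rw [h1, hs]
    linarith [htay, h2]
  have hc : (0 : ℝ) < 1 + 4 * L ^ 2 * μ ^ 2 := by positivity
  rw [hDg, hφp, div_mul_eq_mul_div, div_le_iff₀ hc]
  -- final arithmetic
  have key : F x - Fstar ≤ (1 + 4 * L ^ 2 * μ ^ 2) * s := by
    have e1 : L * i3 ≤ L * (A * Bn) := mul_le_mul_of_nonneg_left hCS hL.le
    have e2 : L * (A * Bn) ≤ L * (A * (μ * (L * A))) := by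
      have := mul_le_mul_of_nonneg_left hEBx hA0
      exact mul_le_mul_of_nonneg_left this hL.le
    have e3 : L * Bn ^ 2 ≤ L * (μ * (L * A)) ^ 2 := by
      have : Bn ^ 2 ≤ (μ * (L * A)) ^ 2 := by nlinarith [hEBx, hBn0]
      exact mul_le_mul_of_nonneg_left this hL.le
    have e4 : F x - Fstar ≤ s + (μ ^ 2 * L ^ 2 + μ * L - 1 / 2) * (L * A ^ 2) := by
      have := hsum
      nlinarith [e1, e2, e3]
    have e5 : (μ ^ 2 * L ^ 2 + μ * L - 1 / 2) * (L * A ^ 2)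
        ≤ 2 * μ ^ 2 * L ^ 2 * (L * A ^ 2) := by
      have h6 : (0 : ℝ) ≤ (μ * L - 1) ^ 2 := sq_nonneg _
      have h7 : (0 : ℝ) ≤ L * A ^ 2 := by positivity
      nlinarith [h6, h7]
    have e6 : 2 * μ ^ 2 * L ^ 2 * (L * A ^ 2) ≤ 4 * L ^ 2 * μ ^ 2 * s := by
      nlinarith [mul_le_mul_of_nonneg_left hstrong
        (show (0:ℝ) ≤ 4 * L ^ 2 * μ ^ 2 by positivity)]
    linarith
  nlinarith [key, hL, mul_le_mul_of_nonneg_left key hL.le]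
end
end

section
/- Consider the LASSO objective F(β) = (1/2)‖Aβ − y‖² + η‖β‖₁ with η > 0, let β̂ be a minimizer, and set ŝ := Aᵀ(y − Aβ̂). Define I₀ = {i : |ŝ_i| < η}, assume the strict complementarity margin δ* := min_{i∈I₀}(η − |ŝ_i|) is positive, and let M := {β ∈ ℝ^d : β_i = 0 for i ∈ I₀, β_i ≥ 0 for i with ŝ_i = η, β_i ≤ 0 for i with ŝ_i = −η}. Fix β⁰ ∈ ℝ^d and let Θ := {β : ‖β‖_∞ ≤ F(β⁰)/η}. Then for all β ∈ Θ, η‖β‖₁ − ⟨ŝ, β⟩ ≥ min{ η δ*/F(β⁰), 2η²/F(β⁰) } · dist(β, M)². In particular, the restricted firm convexity constant γ over any K ⊆ Θ satisfies 2/γ ≤ max{ F(β⁰)/(η δ*), F(β⁰)/(2η²) }. -/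
noncomputable section

open Metric Set
open scoped RealInnerProductSpace

/-- Auxiliary: the LASSO dual certificate satisfies `|s i| ≤ η`. -/
lemma lasso_dual_bound {n d : ℕ} (A : E d →L[ℝ] E n) (y : E n) (η : ℝ)
    (F : E d → ℝ) (βhat : E d) (s : E d) (hη : 0 < η)
    (hF : ∀ v : E d, F v = 1 / 2 * ‖A v - y‖ ^ 2 + η * ∑ i, |v i|)
    (hmin : ∀ v : E d, F βhat ≤ F v)
    (hs : s = ContinuousLinearMap.adjoint A (y - A βhat)) (i : Fin d) :
    |s i| ≤ η := by
  by_contra hcon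
  push_neg at hcon
  set e : E d := EuclideanSpace.single i (1:ℝ) with he
  set C := ‖A e‖^2 with hC
  have hC0 : 0 ≤ C := sq_nonneg _
  have hinner : ⟪A βhat - y, A e⟫ = - s i := by
    have h1 : ⟪s, e⟫ = s i := by rw [he, EuclideanSpace.inner_single_right]; simp
    have h2 : ⟪s, e⟫ = ⟪y - A βhat, A e⟫ := by
      rw [hs]; exact ContinuousLinearMap.adjoint_inner_left A e _
    have h3 : ⟪y - A βhat, A e⟫ = - ⟪A βhat - y, A e⟫ := by
      rw [← inner_neg_left]
      congr 1
      abel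
    have : s i = - ⟪A βhat - y, A e⟫ := by rw [← h1, h2, h3]
    linarith
  have hopt : ∀ t : ℝ, 0 ≤ -(t * s i) + t^2/2 * C + η * |t| := by
    intro t
    have h0 := hmin (βhat + t • e)
    rw [hF, hF] at h0
    have hsplit : A (βhat + t • e) - y = (A βhat - y) + t • (A e) := by
      rw [map_add, map_smul]; abel
    have hn : ‖A (βhat + t • e) - y‖^2 = ‖A βhat - y‖^2 + 2*(t * (- s i)) + t^2 * C := by
      rw [hsplit, norm_add_sq_real, real_inner_smul_right, hinner, hC, norm_smul, mul_pow,
        Real.norm_eq_abs, sq_abs]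
    have hsum : ∑ j, |(βhat + t • e) j| ≤ (∑ j, |βhat j|) + |t| := by
      have h1 : ∀ j, |(βhat + t • e) j| ≤ |βhat j| + |t| * (if j = i then 1 else 0) := by
        intro j
        have hval : (βhat + t • e) j = βhat j + t * (if j = i then 1 else 0) := by
          simp [he, EuclideanSpace.single_apply]
        rw [hval]
        calc |βhat j + t * (if j = i then 1 else 0)|
            ≤ |βhat j| + |t * (if j = i then 1 else 0)| := abs_add_le _ _
          _ = |βhat j| + |t| * (if j = i then 1 else 0) := by
              split_ifs <;> simp [abs_mul]
      calc ∑ j, |(βhat + t • e) j|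
          ≤ ∑ j, (|βhat j| + |t| * (if j = i then 1 else 0)) :=
            Finset.sum_le_sum (fun j _ => h1 j)
        _ = (∑ j, |βhat j|) + |t| := by rw [Finset.sum_add_distrib]; simp
    nlinarith [mul_le_mul_of_nonneg_left hsum hη.le]
  set ε := (|s i| - η)/(C+1) with hε
  have hεpos : 0 < ε := div_pos (by linarith) (by linarith)
  have hεeq : ε * (C + 1) = |s i| - η := by
    rw [hε]; field_simp
  set t := if 0 ≤ s i then ε else -ε with ht
  have h1 : t * s i = ε * |s i| := by
    rw [ht]; split_ifs with h
    · rw [abs_of_nonneg h]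
    · rw [abs_of_neg (lt_of_not_ge h)]; ring
  have h2 : |t| = ε := by
    rw [ht]; split_ifs
    · exact abs_of_pos hεpos
    · rw [abs_neg]; exact abs_of_pos hεpos
  have h3 : t^2 = ε^2 := by rw [ht]; split_ifs <;> ring
  have h4 := hopt t
  rw [h1, h2, h3] at h4
  nlinarith [mul_pos hεpos hεpos, hεpos, hC0]

/-- Restricted firm convexity bound for LASSO.
For the LASSO objective `F(β) = (1/2)‖Aβ − y‖² + η‖β‖₁` with minimizer `β̂`, let
`s = Aᵀ(y − Aβ̂)`, let `δ* > 0` be a strict complementarity margin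
(`δ* ≤ η − |s i|` for all `i` with `|s i| < η`), and let
`M = {β | β i = 0 for |s i| < η, β i ≥ 0 for s i = η, β i ≤ 0 for s i = −η}`.
Then for every `β` in the level-set box `Θ = {β | ‖β‖_∞ ≤ F(β⁰)/η}`,
`η‖β‖₁ − ⟨s, β⟩ ≥ min{ηδ*/F(β⁰), 2η²/F(β⁰)} · dist(β, M)²`. -/
theorem stmt_11 {n d : ℕ} (A : E d →L[ℝ] E n) (y : E n) (η δstar : ℝ)
    (F : E d → ℝ) (βhat β0 : E d) (s : E d) (M : Set (E d))
    (hη : 0 < η)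
    (hF : ∀ v : E d, F v = 1 / 2 * ‖A v - y‖ ^ 2 + η * ∑ i, |v i|)
    (hmin : ∀ v : E d, F βhat ≤ F v)
    (hs : s = ContinuousLinearMap.adjoint A (y - A βhat))
    (hδpos : 0 < δstar)
    (hδ : ∀ i, |s i| < η → δstar ≤ η - |s i|)
    (hM : M = {v : E d | (∀ i, |s i| < η → v i = 0) ∧ (∀ i, s i = η → 0 ≤ v i) ∧
      (∀ i, s i = -η → v i ≤ 0)}) :
    ∀ β : E d, (∀ i, |β i| ≤ F β0 / η) →
      min (η * δstar / F β0) (2 * η ^ 2 / F β0) * (infDist β M) ^ 2 ≤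
        η * ∑ i, |β i| - ⟪s, β⟫ := by
  intro β hβ
  have hsle : ∀ i, |s i| ≤ η := fun i => lasso_dual_bound A y η F βhat s hη hF hmin hs i
  set F0 := F β0 with hF0def
  have hF0 : 0 ≤ F0 := by rw [hF0def, hF β0]; positivity
  set c := min (η * δstar / F0) (2 * η ^ 2 / F0) with hc
  have hc0 : 0 ≤ c := le_min (by positivity) (by positivity)
  have hinner : ⟪s, β⟫ = ∑ i, s i * β i := by
    rw [PiLp.inner_apply]; simp [RCLike.inner_apply]
    exact Finset.sum_congr rfl (fun i _ => mul_comm _ _)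
  rcases eq_or_lt_of_le hF0 with h0 | hF0pos
  · -- degenerate case F0 = 0 : then β = 0 and 0 ∈ M
    have hβ0 : β = 0 := by
      ext i
      have h1 := hβ i
      rw [← h0] at h1
      simp only [zero_div] at h1
      have := abs_nonneg (β i)
      have : |β i| = 0 := le_antisymm h1 this
      simpa [abs_eq_zero] using this
    rw [hβ0]
    have hMem : (0 : E d) ∈ M := by
      rw [hM]
      refine ⟨fun i _ => rfl, fun i _ => le_refl 0, fun i _ => le_refl 0⟩
    rw [infDist_zero_of_mem hMem]
    simp
  · -- main case F0 > 0
    set p : E d := WithLp.toLp 2 (fun j => if |s j| < η then 0 else if s j = η then max (β j) 0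
      else min (β j) 0) with hpdef
    have hpapp : ∀ j, p j = if |s j| < η then 0 else if s j = η then max (β j) 0
        else min (β j) 0 := fun j => rfl
    have hpM : p ∈ M := by
      rw [hM]
      refine ⟨fun j hj => ?_, fun j hj => ?_, fun j hj => ?_⟩
      · rw [hpapp j, if_pos hj]
      · have hnlt : ¬ |s j| < η := by rw [hj, abs_of_pos hη]; exact lt_irrefl η
        rw [hpapp j, if_neg hnlt, if_pos hj]
        exact le_max_right _ _
      · have hnlt : ¬ |s j| < η := by rw [hj, abs_neg, abs_of_pos hη]; exact lt_irrefl η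
        have hne : s j ≠ η := by rw [hj]; intro h; linarith
        rw [hpapp j, if_neg hnlt, if_neg hne]
        exact min_le_right _ _
    have hkey : ∀ i, c * (β i - p i)^2 ≤ η * |β i| - s i * β i := by
      intro i
      have hB : |β i| ≤ F0/η := hβ i
      by_cases hlt : |s i| < η
      · rw [hpapp i, if_pos hlt, sub_zero]
        have hc1 : c ≤ η * δstar / F0 := min_le_left _ _
        have hδi : δstar ≤ η - |s i| := hδ i hlt
        have h1 : c * |β i| ≤ δstar := by
          calc c * |β i| ≤ (η * δstar / F0) * (F0/η) :=
                mul_le_mul hc1 hB (abs_nonneg _) (by positivity)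
            _ = δstar := by field_simp
        have h2 : s i * β i ≤ |s i| * |β i| := by
          calc s i * β i ≤ |s i * β i| := le_abs_self _
            _ = |s i| * |β i| := abs_mul _ _
        nlinarith [mul_le_mul_of_nonneg_right h1 (abs_nonneg (β i)),
          mul_le_mul_of_nonneg_right hδi (abs_nonneg (β i)), sq_abs (β i)]
      · have habs : |s i| = η := le_antisymm (hsle i) (not_lt.mp hlt)
        have hc2 : c ≤ 2 * η^2 / F0 := min_le_right _ _
        have h1 : c * |β i| ≤ 2 * η := by
          calc c * |β i| ≤ (2 * η^2 / F0) * (F0/η) :=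
                mul_le_mul hc2 hB (abs_nonneg _) (by positivity)
            _ = 2 * η := by field_simp
        rcases (abs_eq hη.le).mp habs with hsi | hsi
        · rw [hpapp i, if_neg hlt, if_pos hsi, hsi]
          rcases le_or_gt 0 (β i) with hb | hb
          · rw [max_eq_left hb, abs_of_nonneg hb]
            simp
          · rw [max_eq_right hb.le, sub_zero, abs_of_neg hb]
            nlinarith [mul_le_mul_of_nonneg_right h1 (abs_nonneg (β i)), sq_abs (β i),
              abs_of_neg hb]
        · have hne : s i ≠ η := by rw [hsi]; intro h; linarith
          rw [hpapp i, if_neg hlt, if_neg hne, hsi]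
          rcases le_or_gt (β i) 0 with hb | hb
          · rw [min_eq_left hb, abs_of_nonpos hb]
            simp
          · rw [min_eq_right hb.le, sub_zero, abs_of_pos hb]
            nlinarith [mul_le_mul_of_nonneg_right h1 (abs_nonneg (β i)), sq_abs (β i),
              abs_of_pos hb]
    have hdist : (infDist β M)^2 ≤ ∑ i, (β i - p i)^2 := by
      have h1 : infDist β M ≤ dist β p := infDist_le_dist_of_mem hpM
      have h2 : (dist β p)^2 = ∑ i, (β i - p i)^2 := by
        rw [EuclideanSpace.dist_eq, Real.sq_sqrt (by positivity)]
        simp [Real.dist_eq, sq_abs]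
      calc (infDist β M)^2 ≤ (dist β p)^2 := by
            exact pow_le_pow_left₀ infDist_nonneg h1 2
        _ = ∑ i, (β i - p i)^2 := h2
    calc c * (infDist β M)^2 ≤ c * ∑ i, (β i - p i)^2 :=
          mul_le_mul_of_nonneg_left hdist hc0
      _ = ∑ i, c * (β i - p i)^2 := Finset.mul_sum _ _ _
      _ ≤ ∑ i, (η * |β i| - s i * β i) := Finset.sum_le_sum (fun i _ => hkey i)
      _ = η * ∑ i, |β i| - ⟪s, β⟫ := by
          rw [hinner, Finset.sum_sub_distrib, Finset.mul_sum]
end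
end

section
/- Let 0 < λ ≤ 1/(2L), let x₀ ∈ dom g, and define the proximal gradient sequence x_{k+1} := prox_{λg}(x_k − λ∇f(x_k)). Then for every K ≥ 1, the squared path length satisfies ∑_{k=0}^{K−1} ‖x_{k+1} − x_k‖²/λ ≤ 4(F(x₀) − F*). -/
noncomputable section

open Metric Set
open scoped RealInnerProductSpace

lemma descent {d : ℕ} (f : E d → ℝ) (f' : E d → E d) (L : ℝ) (hL : 0 ≤ L)
    (hf' : ∀ z, HasGradientAt f (f' z) z)
    (hlip : ∀ z w, ‖f' z - f' w‖ ≤ L * ‖z - w‖) (x y : E d) :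
    f y ≤ f x + ⟪f' x, y - x⟫ + L / 2 * ‖y - x‖ ^ 2 := by
  set v := y - x with hv
  have hc : ∀ t : ℝ, HasDerivAt (fun t : ℝ => f (x + t • v)) ⟪f' (x + t • v), v⟫ t := by
    intro t
    have h1 : HasDerivAt (fun t : ℝ => x + t • v) v t := by
      simpa using ((hasDerivAt_id t).smul_const v).const_add x
    have h2 := (hf' (x + t • v)).hasFDerivAt.comp_hasDerivAt t h1
    simpa [InnerProductSpace.toDual_apply_apply, Function.comp_def] using h2
  have hf'cont : Continuous f' := by
    have : LipschitzWith (Real.toNNReal L) f' :=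
      LipschitzWith.of_dist_le_mul (fun a b => by
        rw [Real.coe_toNNReal L hL, dist_eq_norm, dist_eq_norm]; exact hlip a b)
    exact this.continuous
  have hcont : Continuous fun t : ℝ => ⟪f' (x + t • v), v⟫ :=
    Continuous.inner (hf'cont.comp (continuous_const.add (continuous_id.smul continuous_const))) continuous_const
  have hcont2 : Continuous fun t : ℝ => ⟪f' x, v⟫ + L * t * ‖v‖ ^ 2 := continuous_const.add ((continuous_const.mul continuous_id).mul continuous_const)
  have key : f y - f x = ∫ t in (0:ℝ)..1, ⟪f' (x + t • v), v⟫ := by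
    have h := intervalIntegral.integral_eq_sub_of_hasDerivAt (f := fun t : ℝ => f (x + t • v))
      (f' := fun t : ℝ => ⟪f' (x + t • v), v⟫) (a := 0) (b := 1)
      (fun t ht => hc t) (hcont.intervalIntegrable 0 1)
    simp only [one_smul, zero_smul, add_zero] at h
    have hxy : x + v = y := by rw [hv]; abel
    rw [h, hxy]
  have hbound : ∫ t in (0:ℝ)..1, ⟪f' (x + t • v), v⟫ ≤
      ∫ t in (0:ℝ)..1, (⟪f' x, v⟫ + L * t * ‖v‖ ^ 2) := by
    apply intervalIntegral.integral_mono_on (by norm_num) (hcont.intervalIntegrable 0 1)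
      (hcont2.intervalIntegrable 0 1)
    intro t ht
    obtain ⟨ht0, ht1⟩ := ht
    have h1 : ⟪f' (x + t • v) - f' x, v⟫ ≤ ‖f' (x + t • v) - f' x‖ * ‖v‖ :=
      real_inner_le_norm _ _
    have h2 : ‖f' (x + t • v) - f' x‖ ≤ L * (t * ‖v‖) := by
      have := hlip (x + t • v) x
      simpa [norm_smul, abs_of_nonneg ht0] using this
    have h3 : ⟪f' (x + t • v) - f' x, v⟫ ≤ L * t * ‖v‖ ^ 2 := by
      calc ⟪f' (x + t • v) - f' x, v⟫ ≤ ‖f' (x + t • v) - f' x‖ * ‖v‖ := h1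
        _ ≤ L * (t * ‖v‖) * ‖v‖ := mul_le_mul_of_nonneg_right h2 (norm_nonneg _)
        _ = L * t * ‖v‖ ^ 2 := by ring
    have h4 := inner_sub_left (𝕜 := ℝ) (f' (x + t • v)) (f' x) v
    rw [h4] at h3
    linarith
  have hrhs : ∫ t in (0:ℝ)..1, (⟪f' x, v⟫ + L * t * ‖v‖ ^ 2) =
      ⟪f' x, v⟫ + L / 2 * ‖v‖ ^ 2 := by
    have hi2 : IntervalIntegrable (fun t : ℝ => L * t * ‖v‖ ^ 2) MeasureTheory.volume 0 1 := by
      apply Continuous.intervalIntegrable; fun_prop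
    rw [intervalIntegral.integral_add (continuous_const.intervalIntegrable 0 1) hi2]
    have he : (fun t : ℝ => L * t * ‖v‖ ^ 2) = fun t : ℝ => (L * ‖v‖ ^ 2) * t := by
      ext t; ring
    rw [he, intervalIntegral.integral_const_mul, integral_id]
    simp; ring
  rw [hrhs] at hbound
  linarith

set_option maxHeartbeats 1000000 in
/-- Squared path length bound for the proximal gradient sequence.
Let `0 < l ≤ 1/(2L)` and let `x (k+1) = prox_{l·g}(x k − l∇f(x k))` (characterized as
the minimizer of the proximal subproblem). Then for every `N ≥ 1`,
`∑_{k<N} ‖x (k+1) − x k‖²/l ≤ 4(F(x 0) − F*)`, where `F* = inf F` is finite. -/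
theorem stmt_16 {d : ℕ} (f g F : E d → ℝ) (f' : E d → E d)
    (L l Fstar : ℝ) (x : ℕ → E d)
    (hF : ∀ z, F z = f z + g z)
    (hL : 0 < L)
    (hf' : ∀ z, HasGradientAt f (f' z) z)
    (hlip : ∀ z w, ‖f' z - f' w‖ ≤ L * ‖z - w‖)
    (hg : ConvexOn ℝ Set.univ g)
    (hGLB : IsGLB (Set.range F) Fstar)
    (hl : 0 < l) (hlL : l ≤ 1 / (2 * L))
    (hstep : ∀ k, ∀ y, g (x (k + 1)) + 1 / (2 * l) * ‖x (k + 1) - (x k - l • f' (x k))‖ ^ 2 ≤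
      g y + 1 / (2 * l) * ‖y - (x k - l • f' (x k))‖ ^ 2) :
    ∀ N : ℕ, 1 ≤ N →
      ∑ k ∈ Finset.range N, ‖x (k + 1) - x k‖ ^ 2 / l ≤ 4 * (F (x 0) - Fstar) := by
  have hLl : L ≤ 1 / (2 * l) := by
    rw [le_div_iff₀ (by positivity)] at hlL ⊢
    nlinarith
  have onestep : ∀ k, ‖x (k + 1) - x k‖ ^ 2 / l ≤ 4 * (F (x k) - F (x (k + 1))) := by
    intro k
    set Δ := x (k + 1) - x k with hΔ
    set p := f' (x k) with hp
    have h1 := hstep k (x k)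
    have e1 : x (k + 1) - (x k - l • p) = Δ + l • p := by rw [hΔ]; abel
    have e2 : x k - (x k - l • p) = l • p := by abel
    rw [e1, e2] at h1
    have e3 : ‖Δ + l • p‖ ^ 2 = ‖Δ‖ ^ 2 + 2 * (l * ⟪Δ, p⟫) + ‖l • p‖ ^ 2 := by
      rw [norm_add_sq_real, real_inner_smul_right]
    rw [e3] at h1
    -- so g (x (k+1)) + 1/(2l) ‖Δ‖² + ⟪Δ, p⟫ ≤ g (x k)
    have hgs : g (x (k + 1)) + 1 / (2 * l) * ‖Δ‖ ^ 2 + ⟪Δ, p⟫ ≤ g (x k) := by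
      have hl' : (2 * l) ≠ 0 := by positivity
      have : 1 / (2 * l) * (2 * (l * ⟪Δ, p⟫)) = ⟪Δ, p⟫ := by field_simp
      nlinarith [this]
    have hdesc := descent f f' L hL.le hf' hlip (x k) (x (k + 1))
    rw [← hΔ] at hdesc
    have hcomm : ⟪p, Δ⟫ = ⟪Δ, p⟫ := real_inner_comm _ _
    rw [hcomm] at hdesc
    have hsq : 0 ≤ ‖Δ‖ ^ 2 := by positivity
    have hcoef : 1 / (4 * l) ≤ 1 / (2 * l) - L / 2 := by
      have : L / 2 ≤ 1 / (4 * l) := by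
        rw [div_le_div_iff₀ (by norm_num) (by positivity)]
        rw [le_div_iff₀ (by positivity)] at hLl
        nlinarith
      have h14 : 1 / (4 * l) + 1 / (4 * l) = 1 / (2 * l) := by field_simp; ring
      linarith
    have key : F (x (k + 1)) + (1 / (2 * l) - L / 2) * ‖Δ‖ ^ 2 ≤ F (x k) := by
      rw [hF, hF]; linarith
    have : F (x (k + 1)) + 1 / (4 * l) * ‖Δ‖ ^ 2 ≤ F (x k) := by
      nlinarith
    rw [div_le_iff₀ (by positivity : (0:ℝ) < l)]
    have : 1 / (4 * l) * ‖Δ‖ ^ 2 ≤ F (x k) - F (x (k + 1)) := by linarith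
    have h4 : ‖Δ‖ ^ 2 ≤ 4 * l * (1 / (4 * l) * ‖Δ‖ ^ 2) := by
      field_simp; exact le_refl _
    calc ‖Δ‖ ^ 2 ≤ 4 * l * (F (x k) - F (x (k + 1))) := by nlinarith
      _ = 4 * (F (x k) - F (x (k + 1))) * l := by ring
  intro N hN
  have hsum : ∑ k ∈ Finset.range N, ‖x (k + 1) - x k‖ ^ 2 / l ≤
      ∑ k ∈ Finset.range N, 4 * (F (x k) - F (x (k + 1))) :=
    Finset.sum_le_sum fun k _ => onestep k
  have htel : ∑ k ∈ Finset.range N, (F (x k) - F (x (k + 1))) = F (x 0) - F (x N) :=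
    Finset.sum_range_sub' (fun k => F (x k)) N
  have hstar : Fstar ≤ F (x N) := hGLB.1 ⟨x N, rfl⟩
  calc ∑ k ∈ Finset.range N, ‖x (k + 1) - x k‖ ^ 2 / l
      ≤ ∑ k ∈ Finset.range N, 4 * (F (x k) - F (x (k + 1))) := hsum
    _ = 4 * (F (x 0) - F (x N)) := by rw [← Finset.mul_sum, htel]
    _ ≤ 4 * (F (x 0) - Fstar) := by linarith
end
end
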